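/- arXiv:2506.15336 — 4 statements merged into one kernel-verified Lean document; each statement's English description precedes it below -/
import Mathlib

section
/- Define the n×n matrix B with entries b_{1,1} = b, b_{1,j} = 0 for j ≥ 2, b_{i,j} = 0 for j < i, and b_{i,j} = (-1)^{j+1} * binom(j-2, i-2) * b / λ^{i+j-2} for 2 ≤ i ≤ j, where |b| = 1 and |λ| = 1. Then B * conj(B) = I. -/
/-! With `D = diag(λⁱ)`, `B = b • D⁻¹ P D⁻¹` for the real matrix `P = Bmat 1 1`, which is
`1 ⊕ (signed Pascal matrix)`. As `conj b = b⁻¹` and `conj λ = λ⁻¹`, `conj B = b⁻¹ • D P D`, so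
`B conj B = D⁻¹ P² D`, and `P² = 1` is binomial inversion:
`∑ⱼ (-1)^(j+k) C(j,i) C(k,j) = δᵢₖ`. -/

open Matrix

/-- The matrix `B` from the paper, in 1-based coordinates: `b₁₁ = b`,
`b₁ⱼ = 0` for `j ≥ 2`, `bᵢⱼ = 0` for `j < i` and
`bᵢⱼ = (-1)^(j+1) C(j-2, i-2) b / λ^(i+j-2)` for `2 ≤ i ≤ j`.
Here `i, j : Fin n` correspond to the 1-based indices `i+1, j+1`. -/
noncomputable def Bmat (b lam : ℂ) (n : ℕ) : Matrix (Fin n) (Fin n) ℂ :=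
  Matrix.of fun i j =>
    if (i : ℕ) = 0 then (if (j : ℕ) = 0 then b else 0)
    else if (j : ℕ) < (i : ℕ) then 0
    else (-1) ^ ((j : ℕ) + 2) * (((j : ℕ) - 1).choose ((i : ℕ) - 1) : ℂ) * b
      / lam ^ ((i : ℕ) + (j : ℕ))

open Finset

theorem Int.alternating_sum_range_choose_mul_choose (i k : ℕ) :
    ∑ j ∈ Finset.range (k + 1), ((-1) ^ (j + k) * j.choose i * k.choose j : ℤ) =
      if i = k then 1 else 0 := by
  rcases Nat.lt_or_ge k i with hki | hik
  · rw [if_neg hki.ne', sum_eq_zero]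
    intro j hj
    rw [Nat.choose_eq_zero_of_lt (by grind)]
    simp
  · obtain ⟨d, rfl⟩ := Nat.exists_eq_add_of_le hik
    rw [add_assoc, sum_range_add, sum_eq_zero fun j hj => by
      rw [Nat.choose_eq_zero_of_lt (mem_range.mp hj)]; simp, zero_add]
    calc ∑ m ∈ Finset.range (d + 1), ((-1) ^ (i + m + (i + d)) * (i + m).choose i *
            (i + d).choose (i + m) : ℤ)
        = ∑ m ∈ Finset.range (d + 1), (-1) ^ d * ((i + d).choose i : ℤ) *
            ((-1) ^ m * d.choose m) := by
          refine sum_congr rfl fun m _ => ?_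
          have h := Nat.choose_mul (n := i + d) (k := i + m) (s := i) (Nat.le_add_right i m)
          simp only [Nat.add_sub_cancel_left] at h
          rw [show i + m + (i + d) = m + d + 2 * i by ring, pow_add, pow_mul, neg_one_sq,
            one_pow, mul_one, mul_assoc, ← Nat.cast_mul, mul_comm ((i + m).choose i), h]
          push_cast
          ring
      _ = (-1) ^ d * ((i + d).choose i : ℤ) * if d = 0 then 1 else 0 := by
          rw [← mul_sum, Int.alternating_sum_range_choose]
      _ = if i = i + d then 1 else 0 := by
          rcases d with _ | d <;> simp

def signedPascal (R : Type*) [CommRing R] (i j : ℕ) : R :=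
  if i = 0 then (if j = 0 then 1 else 0)
  else if j < i then 0
  else (-1) ^ j * ((j - 1).choose (i - 1) : R)

section signedPascal

variable {R S : Type*} [CommRing R] [CommRing S]

theorem map_signedPascal (f : R →+* S) (i j : ℕ) :
    f (signedPascal R i j) = signedPascal S i j := by
  unfold signedPascal
  split_ifs <;> simp

theorem signedPascal_of_lt {i j : ℕ} (h : j < i) : signedPascal R i j = 0 := by
  simp [signedPascal, h, Nat.ne_zero_of_lt h]

theorem signedPascal_succ_succ (i j : ℕ) :
    signedPascal R (i + 1) (j + 1) = (-1) ^ (j + 1) * (j.choose i : R) := by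
  simp only [signedPascal, Nat.add_one_ne_zero, if_false, Nat.add_sub_cancel]
  split_ifs with h
  · rw [Nat.choose_eq_zero_of_lt (by omega), Nat.cast_zero, mul_zero]
  · rfl

theorem sum_signedPascal_mul_signedPascal (i k : ℕ) :
    ∑ j ∈ range (k + 1), signedPascal R i j * signedPascal R j k = if i = k then 1 else 0 := by
  rcases i with _ | i
  · simp only [signedPascal, if_true, ite_mul, one_mul, zero_mul]
    simp [eq_comm]
  rcases k with _ | k
  · simp [signedPascal_of_lt]
  rw [sum_range_succ', signedPascal_of_lt (Nat.succ_pos i), zero_mul, add_zero]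
  simpa [signedPascal_succ_succ, pow_succ, mul_assoc, mul_comm, mul_left_comm, pow_add] using
    congrArg (Int.cast : ℤ → R) (Int.alternating_sum_range_choose_mul_choose i k)

variable (R) in
def signedPascalMatrix (n : ℕ) : Matrix (Fin n) (Fin n) R :=
  of fun i j => signedPascal R i j

theorem signedPascalMatrix_mul_self (n : ℕ) :
    signedPascalMatrix R n * signedPascalMatrix R n = 1 := by
  ext i k
  rw [mul_apply, one_apply]
  simp only [signedPascalMatrix, of_apply]
  rw [Fin.sum_univ_eq_sum_range (fun j => signedPascal R i j * signedPascal R j k),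
    ← sum_subset (range_subset_range.mpr k.isLt), sum_signedPascal_mul_signedPascal]
  · simp only [Fin.val_inj]
  · intro j _ hj
    rw [signedPascal_of_lt (i := j) (by simpa using hj), mul_zero]

end signedPascal

theorem Bmat_apply (b lam : ℂ) {n : ℕ} (i j : Fin n) :
    Bmat b lam n i j = b * signedPascal ℂ i j / lam ^ ((i : ℕ) + j) := by
  simp only [Bmat, signedPascal, of_apply]
  split_ifs with hi hj
  · simp [hi, hj]
  · simp
  · simp
  · ring

theorem Bmat_eq_smul_diagonal_mul (b lam : ℂ) (n : ℕ) :
    Bmat b lam n = b • (diagonal (fun i : Fin n => (lam ^ (i : ℕ))⁻¹) *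
      signedPascalMatrix ℂ n * diagonal fun i : Fin n => (lam ^ (i : ℕ))⁻¹) := by
  ext i j
  rw [Bmat_apply, Matrix.smul_apply, mul_diagonal, diagonal_mul, signedPascalMatrix, of_apply,
    smul_eq_mul]
  ring

theorem Bmat_map (f : ℂ →+* ℂ) (b lam : ℂ) (n : ℕ) :
    (Bmat b lam n).map f = Bmat (f b) (f lam) n := by
  ext i j
  simp [Bmat_apply, map_signedPascal]

theorem Bmat_mul_Bmat_inv_inv {b lam : ℂ} (hb : b ≠ 0) (hlam : lam ≠ 0) (n : ℕ) :
    Bmat b lam n * Bmat b⁻¹ lam⁻¹ n = 1 := by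
  rw [Bmat_eq_smul_diagonal_mul, Bmat_eq_smul_diagonal_mul, smul_mul_smul_comm,
    mul_inv_cancel₀ hb, one_smul]
  simp only [inv_pow, inv_inv]
  set D := diagonal fun i : Fin n => (lam ^ (i : ℕ))⁻¹
  set D' := diagonal fun i : Fin n => lam ^ (i : ℕ)
  set P := signedPascalMatrix ℂ n
  have hD : D * D' = 1 := by
    rw [diagonal_mul_diagonal, ← diagonal_one]
    exact congrArg diagonal (funext fun i => inv_mul_cancel₀ (pow_ne_zero _ hlam))
  calc D * P * D * (D' * P * D') = D * P * (D * D') * P * D' := by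
        simp only [Matrix.mul_assoc]
    _ = 1 := by
        rw [hD, Matrix.mul_one, Matrix.mul_assoc D, signedPascalMatrix_mul_self, Matrix.mul_one,
          hD]

/-- If `|b| = 1` and `|λ| = 1` then `B * conj B = I`. -/
theorem Bmat_mul_conj_eq_one (n : ℕ) (b lam : ℂ)
    (hb : ‖b‖ = 1) (hlam : ‖lam‖ = 1) :
    Bmat b lam n * (Bmat b lam n).map (starRingEnd ℂ) = 1 := by
  rw [Bmat_map, ← Complex.inv_eq_conj hb, ← Complex.inv_eq_conj hlam]
  exact Bmat_mul_Bmat_inv_inv (ne_zero_of_norm_ne_zero (by simp [hb]))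
    (ne_zero_of_norm_ne_zero (by simp [hlam])) n
end

section
/- With B as defined (b_{1,1} = b, b_{1,j} = 0 for j ≥ 2, b_{i,j} = 0 for j < i, b_{i,j} = (-1)^{j+1} binom(j-2, i-2) b / λ^{i+j-2} for 2 ≤ i ≤ j, |b| = |λ| = 1), and J = J(λ, n) the Jordan block, one has B J = (conj J)⁻¹ B. -/
open Matrix

/-- The `n × n` Jordan block with eigenvalue `λ`. -/
def jordanBlock (lam : ℂ) (n : ℕ) : Matrix (Fin n) (Fin n) ℂ :=
  Matrix.of fun i j => if (j : ℕ) = i then lam else if (j : ℕ) = i + 1 then 1 else 0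

/-! Write `J(λ, n) = λ + N` with `N` the nilpotent shift. Since `conj λ = λ⁻¹`, the claim is
`(λ⁻¹ + N) B (λ + N) = B`, i.e. `λ⁻¹ B N + λ N B + N B N = 0`. In 0-based indices this says
`λ⁻¹ b i j + λ b (i+1) (j+1) + b (i+1) j = 0`, and for `i, j ≥ 1` that is Pascal's rule for the
binomial coefficients in `B`. -/

section Shift

variable (R : Type*) [Semiring R] (n : ℕ)

def shiftMatrix : Matrix (Fin n) (Fin n) R :=
  Matrix.of fun i j => if (j : ℕ) = i + 1 then 1 else 0

variable {R n}

theorem of_mul_shiftMatrix (f : ℕ → ℕ → R) :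
    (Matrix.of fun i j : Fin n => f i j) * shiftMatrix R n =
      Matrix.of fun i j : Fin n => if (j : ℕ) = 0 then 0 else f i (j - 1) := by
  ext i ⟨j, hj⟩
  simp only [mul_apply, of_apply, shiftMatrix]
  rw [Fin.sum_univ_eq_sum_range (fun k => f i k * if j = k + 1 then (1 : R) else 0)]
  rcases j with _ | j
  · simp
  · simp only [add_left_inj, mul_ite, mul_one, mul_zero, Finset.sum_ite_eq, Finset.mem_range,
      Nat.add_one_ne_zero, if_false, Nat.add_sub_cancel]
    exact if_pos (by omega)

theorem shiftMatrix_mul_of (f : ℕ → ℕ → R) (hf : ∀ j < n, f n j = 0) :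
    shiftMatrix R n * (Matrix.of fun i j : Fin n => f i j) =
      Matrix.of fun i j : Fin n => f (i + 1) j := by
  ext i j
  simp only [mul_apply, of_apply, shiftMatrix]
  rw [Fin.sum_univ_eq_sum_range (fun k => (if k = (i : ℕ) + 1 then (1 : R) else 0) * f k j)]
  simp only [ite_mul, one_mul, zero_mul, Finset.sum_ite_eq', Finset.mem_range]
  split_ifs with h
  · rfl
  · rw [show (i : ℕ) + 1 = n by omega, hf j j.isLt]

end Shift

theorem jordanBlock_eq_smul_one_add_shiftMatrix (lam : ℂ) (n : ℕ) :
    jordanBlock lam n = lam • 1 + shiftMatrix ℂ n := by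
  ext i j
  simp only [jordanBlock, shiftMatrix, Matrix.add_apply, Matrix.smul_apply, one_apply, of_apply,
    Fin.ext_iff, smul_eq_mul]
  split_ifs <;> first | omega | simp

theorem jordanBlock_isUpperTriangular (lam : ℂ) (n : ℕ) :
    (jordanBlock lam n).IsUpperTriangular := by
  intro i j (hji : j < i)
  simp only [jordanBlock, of_apply]
  rw [if_neg (by omega), if_neg (by omega)]

theorem det_jordanBlock (lam : ℂ) (n : ℕ) : (jordanBlock lam n).det = lam ^ n := by
  rw [det_of_isUpperTriangular (jordanBlock_isUpperTriangular lam n)]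
  simp [jordanBlock]

theorem jordanBlock_map_conj (lam : ℂ) (n : ℕ) :
    (jordanBlock lam n).map (starRingEnd ℂ) = jordanBlock (starRingEnd ℂ lam) n := by
  ext i j
  simp only [jordanBlock, map_apply, of_apply]
  split_ifs <;> simp

theorem of_mul_jordanBlock (f : ℕ → ℕ → ℂ) (lam : ℂ) (n : ℕ) :
    (Matrix.of fun i j : Fin n => f i j) * jordanBlock lam n =
      Matrix.of fun i j : Fin n => lam * f i j + if (j : ℕ) = 0 then 0 else f i (j - 1) := by
  rw [jordanBlock_eq_smul_one_add_shiftMatrix, mul_add, Matrix.mul_smul, mul_one,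
    of_mul_shiftMatrix]
  rfl

theorem jordanBlock_mul_of (f : ℕ → ℕ → ℂ) (lam : ℂ) {n : ℕ} (hf : ∀ j < n, f n j = 0) :
    jordanBlock lam n * (Matrix.of fun i j : Fin n => f i j) =
      Matrix.of fun i j : Fin n => lam * f i j + f (i + 1) j := by
  rw [jordanBlock_eq_smul_one_add_shiftMatrix, add_mul, smul_mul, one_mul, shiftMatrix_mul_of f hf]
  rfl

noncomputable def Bentry (b lam : ℂ) (i j : ℕ) : ℂ :=
  if i = 0 then (if j = 0 then b else 0)
  else if j < i then 0
  else (-1) ^ (j + 2) * ((j - 1).choose (i - 1) : ℂ) * b / lam ^ (i + j)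

theorem Bmat_eq_of_Bentry (b lam : ℂ) (n : ℕ) :
    Bmat b lam n = Matrix.of fun i j : Fin n => Bentry b lam i j :=
  rfl

section Bentry

variable (b lam : ℂ)

theorem Bentry_eq_zero_of_lt {i j : ℕ} (h : j < i) : Bentry b lam i j = 0 := by
  unfold Bentry
  split_ifs <;> first | rfl | omega

theorem Bentry_zero_zero : Bentry b lam 0 0 = b := rfl

theorem Bentry_zero_succ (j : ℕ) : Bentry b lam 0 (j + 1) = 0 := rfl

theorem Bentry_succ_zero (i : ℕ) : Bentry b lam (i + 1) 0 = 0 :=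
  Bentry_eq_zero_of_lt b lam i.succ_pos

theorem Bentry_succ_succ (i j : ℕ) :
    Bentry b lam (i + 1) (j + 1) = (-1) ^ (j + 1) * (j.choose i : ℂ) * b / lam ^ (i + j + 2) := by
  rcases lt_or_ge j i with h | h
  · rw [Bentry_eq_zero_of_lt b lam (by omega), Nat.choose_eq_zero_of_lt h]
    simp
  · simp only [Bentry, Nat.add_one_ne_zero, if_false, if_neg (show ¬ j + 1 < i + 1 by omega),
      Nat.add_sub_cancel]
    ring_nf

theorem Bentry_recurrence {lam : ℂ} (hlam : lam ≠ 0) (i j : ℕ) :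
    lam⁻¹ * Bentry b lam i j + lam * Bentry b lam (i + 1) (j + 1) + Bentry b lam (i + 1) j = 0 := by
  rcases i with _ | i <;> rcases j with _ | j
  · rw [Bentry_zero_zero, Bentry_succ_succ, Bentry_succ_zero, Nat.choose_self, Nat.cast_one]
    field_simp
    ring
  · rw [Bentry_zero_succ, Bentry_succ_succ, Bentry_succ_succ, Nat.choose_zero_right,
      Nat.choose_zero_right, Nat.cast_one]
    field_simp
    ring
  · rw [Bentry_succ_zero, Bentry_succ_succ, Bentry_succ_zero, Nat.choose_eq_zero_of_lt i.succ_pos]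
    simp
  · rw [Bentry_succ_succ, Bentry_succ_succ, Bentry_succ_succ, Nat.choose_succ_succ' j i]
    push_cast
    field_simp
    ring

end Bentry

theorem jordanBlock_inv_mul_Bmat_mul_jordanBlock (b : ℂ) {lam : ℂ} (hlam : lam ≠ 0) (n : ℕ) :
    jordanBlock lam⁻¹ n * (Bmat b lam n * jordanBlock lam n) = Bmat b lam n := by
  rw [Bmat_eq_of_Bentry, of_mul_jordanBlock, jordanBlock_mul_of
    (fun i j => lam * Bentry b lam i j + if j = 0 then 0 else Bentry b lam i (j - 1))]
  · have hinv : lam⁻¹ * lam = 1 := inv_mul_cancel₀ hlam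
    ext i ⟨_ | j, hj⟩
    · simp only [of_apply, if_true, add_zero, Bentry_succ_zero]
      linear_combination Bentry b lam i 0 * hinv
    · simp only [of_apply, Nat.add_one_ne_zero, if_false, Nat.add_sub_cancel]
      linear_combination Bentry_recurrence b hlam i j + Bentry b lam i (j + 1) * hinv
  · intro j hj
    simp [Bentry_eq_zero_of_lt _ _ hj, Bentry_eq_zero_of_lt _ _ (show (j : ℕ) - 1 < n by omega)]

theorem Bmat_intertwines_jordanBlock_general (n : ℕ) (b lam : ℂ)
    (hlam : ‖lam‖ = 1) :
    Bmat b lam n * jordanBlock lam n =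
      ((jordanBlock lam n).map (starRingEnd ℂ))⁻¹ * Bmat b lam n := by
  have hlam0 : lam ≠ 0 := norm_ne_zero_iff.mp (by simp [hlam])
  have hdet : IsUnit (jordanBlock lam⁻¹ n).det := by simp [det_jordanBlock, hlam0]
  rw [jordanBlock_map_conj, ← Complex.inv_eq_conj hlam]
  calc Bmat b lam n * jordanBlock lam n
      = (jordanBlock lam⁻¹ n)⁻¹ * (jordanBlock lam⁻¹ n * (Bmat b lam n * jordanBlock lam n)) :=
        (nonsing_inv_mul_cancel_left _ _ hdet).symm
    _ = (jordanBlock lam⁻¹ n)⁻¹ * Bmat b lam n := by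
        rw [jordanBlock_inv_mul_Bmat_mul_jordanBlock b hlam0]

/-- With `|b| = |λ| = 1` and `J = J(λ, n)`, one has `B J = (conj J)⁻¹ B`. -/
theorem Bmat_intertwines_jordanBlock (n : ℕ) (b lam : ℂ)
    (hb : ‖b‖ = 1) (hlam : ‖lam‖ = 1) :
    Bmat b lam n * jordanBlock lam n =
      ((jordanBlock lam n).map (starRingEnd ℂ))⁻¹ * Bmat b lam n :=
  Bmat_intertwines_jordanBlock_general n b lam hlam
end

section
/- Every element of SL(n, ℂ) all of whose eigenvalues have modulus one is c-reversible: it is conjugate to the inverse of its entrywise complex conjugate. -/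
/-!
By the structure theorem for torsion `ℂ[X]`-modules, `A` is conjugate to multiplication by the
root `r` on a product of algebras `ℂ[X] ⧸ (X - λ) ^ e`, each `λ` an eigenvalue of `A`.
Entrywise conjugation carries this to the same model for `conj A`, with `λ` replaced by `conj λ`.
As `|λ| = 1` we have `conj λ * λ = 1`, so in `ℂ[X] ⧸ (X - λ) ^ e` the root is a unit and
`r⁻¹ - conj λ = -r⁻¹ conj λ (r - λ)` is nilpotent of order at most `e`; hence `r ↦ r⁻¹` defines
an algebra isomorphism `ℂ[X] ⧸ (X - conj λ) ^ e ≃ ℂ[X] ⧸ (X - λ) ^ e`. So `(conj A)⁻¹`, which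
acts as `r⁻¹` in the model of `conj A`, has the same model as `A`.
-/

open Polynomial Matrix

universe u

noncomputable section

variable {K : Type u} [Field K]

namespace AdjoinRoot

variable (μ ν : K) (e : ℕ)

theorem root_sub_algebraMap_pow_eq_zero :
    (root ((X - C μ) ^ e) - algebraMap K _ μ) ^ e = 0 := by
  rw [algebraMap_eq, ← mk_X, ← mk_C, ← map_sub, ← map_pow, mk_self]

theorem subsingleton_of_pow_zero : Subsingleton (AdjoinRoot ((X - C μ) ^ 0)) :=
  subsingleton_of_zero_eq_one (by simpa using (root_sub_algebraMap_pow_eq_zero μ 0).symm)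

theorem exists_ne_zero_root_mul_eq_smul (he : e ≠ 0) :
    ∃ x : AdjoinRoot ((X - C μ) ^ e), x ≠ 0 ∧ root _ * x = μ • x := by
  refine ⟨mk _ ((X - C μ) ^ (e - 1)), fun h ↦ ?_, ?_⟩
  · have := natDegree_le_of_dvd (mk_eq_zero.mp h) (pow_ne_zero _ (X_sub_C_ne_zero μ))
    simp only [natDegree_pow, natDegree_X_sub_C] at this
    omega
  · rw [← sub_eq_zero, Algebra.smul_def, ← sub_mul, algebraMap_eq, ← mk_X, ← mk_C, ← map_sub,
      ← map_mul, ← pow_succ', Nat.sub_add_cancel (Nat.pos_of_ne_zero he), mk_self]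

theorem isUnit_root (hν : ν ≠ 0) : IsUnit (root ((X - C ν) ^ e)) := by
  simpa using (IsNilpotent.isUnit_add_left_of_commute ⟨e, root_sub_algebraMap_pow_eq_zero ν e⟩
    ((isUnit_iff_ne_zero.mpr hν).map (algebraMap K (AdjoinRoot ((X - C ν) ^ e))))
    (Commute.all _ _))

variable {μ ν}

def invRootAlgHom (h : μ * ν = 1) :
    AdjoinRoot ((X - C μ) ^ e) →ₐ[K] AdjoinRoot ((X - C ν) ^ e) :=
  liftAlgHom _ (Algebra.ofId K _) ↑(isUnit_root ν e (right_ne_zero_of_mul_eq_one h)).unit⁻¹ <| by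
    set x : AdjoinRoot ((X - C ν) ^ e) := ↑(isUnit_root ν e (right_ne_zero_of_mul_eq_one h)).unit⁻¹
    have hx : x * root _ = 1 := Units.inv_mul _
    have hμν : algebraMap K (AdjoinRoot ((X - C ν) ^ e)) μ * algebraMap K _ ν = 1 := by
      rw [← map_mul, h, map_one]
    have : x - algebraMap K _ μ = -(x * algebraMap K _ μ) * (root _ - algebraMap K _ ν) := by
      linear_combination -x * hμν + algebraMap K _ μ * hx
    rw [eval₂_pow, eval₂_sub, eval₂_X, eval₂_C]
    change (x - algebraMap K _ μ) ^ e = 0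
    rw [this, mul_pow, root_sub_algebraMap_pow_eq_zero, mul_zero]

theorem invRootAlgHom_root_mul (h : μ * ν = 1) :
    invRootAlgHom e h (root _) * root _ = 1 := by
  simp [invRootAlgHom]

def invRootAlgEquiv (h : μ * ν = 1) :
    AdjoinRoot ((X - C μ) ^ e) ≃ₐ[K] AdjoinRoot ((X - C ν) ^ e) :=
  have h' : ν * μ = 1 := by rwa [mul_comm]
  .ofAlgHom (invRootAlgHom e h) (invRootAlgHom e h')
    (algHom_ext <| left_inv_eq_right_inv
      (by rw [AlgHom.comp_apply, ← map_mul, invRootAlgHom_root_mul, map_one])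
      (invRootAlgHom_root_mul e h))
    (algHom_ext <| left_inv_eq_right_inv
      (by rw [AlgHom.comp_apply, ← map_mul, invRootAlgHom_root_mul, map_one])
      (invRootAlgHom_root_mul e h'))

theorem invRootAlgEquiv_root_mul (h : μ * ν = 1) :
    invRootAlgEquiv e h (root _) * root _ = 1 :=
  invRootAlgHom_root_mul e h

-- `AdjoinRoot q` is `K[X] ⧸ Ideal.span {q}`, so the last step is the identity map.
def quotSpanEquiv {p q : K[X]} (h : Associated p q) : (K[X] ⧸ K[X] ∙ p) ≃ₗ[K] AdjoinRoot q :=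
  ((Submodule.quotEquivOfEq _ _ (Ideal.span_singleton_eq_span_singleton.mpr h)).restrictScalars
    K).trans
    { toFun := id, invFun := id, map_add' := fun _ _ ↦ rfl, map_smul' := fun _ _ ↦ rfl,
      left_inv := fun _ ↦ rfl, right_inv := fun _ ↦ rfl }

theorem quotSpanEquiv_X_smul {p q : K[X]} (h : Associated p q) (z : K[X] ⧸ K[X] ∙ p) :
    quotSpanEquiv h ((X : K[X]) • z) = root q * quotSpanEquiv h z := by
  obtain ⟨r, rfl⟩ := Submodule.Quotient.mk_surjective _ z
  rfl

end AdjoinRoot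

theorem Irreducible.exists_associated_X_sub_C [IsAlgClosed K] {p : K[X]} (hp : Irreducible p) :
    ∃ a, Associated (X - C a) p := by
  obtain ⟨a, ha⟩ := IsAlgClosed.exists_root p (degree_pos_of_irreducible hp).ne'
  exact ⟨a, (irreducible_X_sub_C a).associated_of_dvd hp (dvd_iff_isRoot.2 ha)⟩

variable {ι : Type*}

/-- Multiplication by `JordanBlocks.root` is the Jordan matrix with blocks `J_{e i}(μ i)`. -/
abbrev JordanBlocks (μ : ι → K) (e : ι → ℕ) : Type _ := ∀ i, AdjoinRoot ((X - C (μ i)) ^ e i)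

namespace JordanBlocks

variable (μ : ι → K) (e : ι → ℕ)

def root : JordanBlocks μ e := fun _ ↦ AdjoinRoot.root _

theorem exists_algEquiv_subtype_ne_zero :
    ∃ Φ : JordanBlocks μ e ≃ₐ[K] JordanBlocks (fun i : {i // e i ≠ 0} ↦ μ i) (fun i ↦ e i),
      Φ (root μ e) = root _ _ := by
  classical
  let Φ : JordanBlocks μ e →ₐ[K] JordanBlocks (fun i : {i // e i ≠ 0} ↦ μ i) (fun i ↦ e i) :=
    AlgHom.pi fun i ↦ Pi.evalAlgHom _ _ i.1
  have hinj : Function.Injective Φ := fun x y hxy ↦ funext fun i ↦ by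
    by_cases hi : e i = 0
    · have := AdjoinRoot.subsingleton_of_pow_zero (μ i)
      rw [← hi] at this
      exact Subsingleton.elim _ _
    · exact congr_fun hxy ⟨i, hi⟩
  have hsurj : Function.Surjective Φ := fun y ↦
    ⟨fun i ↦ if hi : e i = 0 then 0 else y ⟨i, hi⟩, funext fun i ↦ by simp [Φ, i.2]⟩
  exact ⟨AlgEquiv.ofBijective Φ ⟨hinj, hsurj⟩, rfl⟩

def invAlgEquiv {ν : ι → K} (h : ∀ i, μ i * ν i = 1) : JordanBlocks μ e ≃ₐ[K] JordanBlocks ν e :=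
  AlgEquiv.piCongrRight fun i ↦ AdjoinRoot.invRootAlgEquiv (e i) (h i)

theorem invAlgEquiv_root_mul {ν : ι → K} (h : ∀ i, μ i * ν i = 1) :
    invAlgEquiv μ e h (root μ e) * root ν e = 1 :=
  funext fun i ↦ AdjoinRoot.invRootAlgEquiv_root_mul (e i) (h i)

section Star

variable [StarRing K]

def starRingEquiv : JordanBlocks μ e ≃+* JordanBlocks (fun i ↦ star (μ i)) e :=
  RingEquiv.piCongrRight fun i ↦ AdjoinRoot.mapRingEquiv starRingAut _ _ <| by
    simp [Polynomial.map_pow]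

theorem starRingEquiv_root : starRingEquiv μ e (root μ e) = root _ e :=
  funext fun _ ↦ by simp [starRingEquiv, root]

theorem starRingEquiv_smul (a : K) (z : JordanBlocks μ e) :
    starRingEquiv μ e (a • z) = star a • starRingEquiv μ e z := by
  rw [Algebra.smul_def, map_mul, Algebra.smul_def]
  congr 1
  funext i
  simp [starRingEquiv, AdjoinRoot.algebraMap_eq]

def starSemilinearEquiv : JordanBlocks μ e ≃ₗ⋆[K] JordanBlocks (fun i ↦ star (μ i)) e :=
  { starRingEquiv μ e with map_smul' := starRingEquiv_smul μ e }

end Star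

variable {μ e}

theorem hasEigenvalue {V : Type*} [AddCommGroup V] [Module K V] {f : Module.End K V}
    {g : V ≃ₗ[K] JordanBlocks μ e} (hg : ∀ v, g (f v) = root μ e * g v) {i : ι} (he : e i ≠ 0) :
    f.HasEigenvalue (μ i) := by
  classical
  obtain ⟨x, hx0, hx⟩ := AdjoinRoot.exists_ne_zero_root_mul_eq_smul (μ i) (e i) he
  refine Module.End.hasEigenvalue_of_hasEigenvector (x := g.symm (Pi.single i x))
    ⟨Module.End.mem_eigenspace_iff.mpr (g.injective ?_), by simpa using hx0⟩
  rw [hg, map_smul, g.apply_symm_apply, ← Pi.single_smul, ← hx]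
  ext j
  by_cases hj : j = i
  · subst hj
    simp [root]
  · simp [hj]

end JordanBlocks

theorem Module.End.exists_linearEquiv_jordanBlocks [IsAlgClosed K] {V : Type*} [AddCommGroup V]
    [Module K V] [FiniteDimensional K V] (f : Module.End K V) :
    ∃ (ι : Type u) (_ : Fintype ι) (μ : ι → K) (e : ι → ℕ) (_ : ∀ i, e i ≠ 0)
      (g : V ≃ₗ[K] JordanBlocks μ e), ∀ v, g (f v) = JordanBlocks.root μ e * g v := by
  classical
  obtain ⟨ι, _, p, hp, e, ⟨ψ⟩⟩ := Module.equiv_directSum_of_isTorsion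
    (Module.AEval.isTorsion_of_finiteDimensional (K := K) (M := V) (a := f))
  choose μ hμ using fun i ↦ (hp i).exists_associated_X_sub_C
  let g : V ≃ₗ[K] JordanBlocks μ e := (Module.AEval'.of f).trans <| (ψ.restrictScalars K).trans <|
    (DirectSum.linearEquivFunOnFintype K ι _).trans
      (LinearEquiv.piCongrRight fun i ↦ AdjoinRoot.quotSpanEquiv ((hμ i).pow_pow (n := e i)).symm)
  have hg v : g (f v) = JordanBlocks.root μ e * g v := funext fun i ↦ by
    have hX : Module.AEval'.of f (f v) = (X : K[X]) • Module.AEval'.of f v :=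
      (Module.AEval'.X_smul_of f v).symm
    simp only [g, LinearEquiv.trans_apply, hX, LinearEquiv.restrictScalars_apply, map_smul,
      LinearEquiv.piCongrRight_apply, DirectSum.linearEquivFunOnFintype_apply, DirectSum.smul_apply,
      Pi.mul_apply, AdjoinRoot.quotSpanEquiv_X_smul]
    rfl
  obtain ⟨Φ, hΦ⟩ := JordanBlocks.exists_algEquiv_subtype_ne_zero μ e
  refine ⟨{i // e i ≠ 0}, inferInstance, _, _, fun i ↦ i.2, g.trans Φ.toLinearEquiv, fun v ↦ ?_⟩
  simp [hg, hΦ]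

section Matrix

variable {n : Type*} [Fintype n]

theorem Matrix.exists_isUnit_mul_mul_inv_eq_of_linearEquiv [DecidableEq n] {R M : Type*}
    [CommRing R] [AddCommGroup M] [Module R M] {A B : Matrix n n R} (T : M → M)
    (g h : (n → R) ≃ₗ[R] M) (hg : ∀ v, g (A *ᵥ v) = T (g v)) (hh : ∀ v, h (B *ᵥ v) = T (h v)) :
    ∃ P : Matrix n n R, IsUnit P ∧ P * A * P⁻¹ = B := by
  let E : (n → R) ≃ₗ[R] (n → R) := g.trans h.symm
  have hP : IsUnit (LinearMap.toMatrix' (E : (n → R) →ₗ[R] (n → R))).det := by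
    rw [LinearMap.det_toMatrix']
    exact E.isUnit_det'
  have hPA : LinearMap.toMatrix' (E : (n → R) →ₗ[R] (n → R)) * A
      = B * LinearMap.toMatrix' (E : (n → R) →ₗ[R] (n → R)) := by
    refine Matrix.toLin'.injective (LinearMap.ext fun v ↦ h.injective ?_)
    simp [E, Matrix.toLin'_mul, hg, hh]
  refine ⟨_, (Matrix.isUnit_iff_isUnit_det _).mpr hP, ?_⟩
  rw [hPA]
  exact Matrix.mul_nonsing_inv_cancel_right _ _ hP

namespace JordanBlocks

variable {μ : ι → K} {e : ι → ℕ}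

theorem exists_linearEquiv_map_star [StarRing K] {A : Matrix n n K}
    {g : (n → K) ≃ₗ[K] JordanBlocks μ e} (hg : ∀ v, g (A *ᵥ v) = root μ e * g v) :
    ∃ h : (n → K) ≃ₗ[K] JordanBlocks (fun i ↦ star (μ i)) e,
      ∀ v, h (A.map (starRingEnd K) *ᵥ v) = root _ e * h v := by
  refine ⟨(_root_.starLinearEquiv K).trans (g.trans (starSemilinearEquiv μ e)), fun v ↦ ?_⟩
  have : star (A.map (starRingEnd K) *ᵥ v) = A *ᵥ star v := by
    ext i
    simp [Matrix.mulVec, dotProduct, star_sum, starRingEnd_apply]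
  simp [this, hg, starSemilinearEquiv, starRingEquiv_root]

theorem exists_linearEquiv_inv [DecidableEq n] {A : Matrix n n K} (hA : IsUnit A)
    {g : (n → K) ≃ₗ[K] JordanBlocks μ e} (hg : ∀ v, g (A *ᵥ v) = root μ e * g v)
    {ν : ι → K} (hμν : ∀ i, μ i * ν i = 1) :
    ∃ h : (n → K) ≃ₗ[K] JordanBlocks ν e, ∀ v, h (A⁻¹ *ᵥ v) = root ν e * h v := by
  refine ⟨g.trans (invAlgEquiv μ e hμν).toLinearEquiv, fun v ↦ ?_⟩
  have hv : g v = root μ e * g (A⁻¹ *ᵥ v) := by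
    rw [← hg, Matrix.mulVec_mulVec,
      Matrix.mul_nonsing_inv _ ((Matrix.isUnit_iff_isUnit_det _).mp hA), Matrix.one_mulVec]
  simp only [LinearEquiv.trans_apply, AlgEquiv.toLinearEquiv_apply, hv, map_mul]
  rw [← mul_assoc, mul_comm (root ν e), invAlgEquiv_root_mul, one_mul]

end JordanBlocks

end Matrix

end

theorem unit_modulus_spectrum_c_reversible_general
    (n : ℕ) (A : Matrix (Fin n) (Fin n) ℂ)
    (hspec : ∀ lam ∈ spectrum ℂ A, ‖lam‖ = 1) :
    ∃ P : Matrix (Fin n) (Fin n) ℂ, IsUnit P ∧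
      P * A * P⁻¹ = (A.map (starRingEnd ℂ))⁻¹ := by
  obtain ⟨ι, _, μ, e, he, g, hg⟩ := Module.End.exists_linearEquiv_jordanBlocks (Matrix.toLin' A)
  simp only [Matrix.toLin'_apply] at hg
  have hμ i : star (μ i) * μ i = 1 := by
    have hnorm := hspec _ <| by
      rw [← Matrix.spectrum_toLin', ← Module.End.hasEigenvalue_iff_mem_spectrum]
      exact JordanBlocks.hasEigenvalue hg (he i)
    simpa [hnorm] using Complex.conj_mul' (μ i)
  have hA : IsUnit (A.map (starRingEnd ℂ)) :=
    ((spectrum.zero_notMem_iff ℂ).mp fun h0 ↦ by simpa using hspec 0 h0).map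
      (starRingEnd ℂ).mapMatrix
  obtain ⟨h₁, hh₁⟩ := JordanBlocks.exists_linearEquiv_map_star hg
  obtain ⟨h₂, hh₂⟩ := JordanBlocks.exists_linearEquiv_inv hA hh₁ hμ
  exact Matrix.exists_isUnit_mul_mul_inv_eq_of_linearEquiv _ g h₂ hg hh₂

/-- Every element of `SL(n, ℂ)` all of whose eigenvalues have modulus one is
c-reversible: it is conjugate to the inverse of its entrywise conjugate. -/
theorem unit_modulus_spectrum_c_reversible
    (n : ℕ) (A : Matrix (Fin n) (Fin n) ℂ) (hA : A.det = 1)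
    (hspec : ∀ lam ∈ spectrum ℂ A, ‖lam‖ = 1) :
    ∃ P : Matrix (Fin n) (Fin n) ℂ, IsUnit P ∧
      P * A * P⁻¹ = (A.map (starRingEnd ℂ))⁻¹ :=
  unit_modulus_spectrum_c_reversible_general n A hspec
end

section
/- Every semisimple element A of SL(n, ℂ) whose multiset of eigenvalues is invariant under λ ↦ conj(λ)⁻¹ is c-reversible. -/
open Matrix Polynomial

/-!
Diagonalize `A` as a conjugate of `D = diagonal d`. The spectral hypothesis says that `d` and
`i ↦ (conj (d i))⁻¹` are rearrangements of each other, so a permutation matrix conjugates `D`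
to `diagonal (conj d)⁻¹ = (conj D)⁻¹`; since conjugacy is preserved by entrywise conjugation and by
inversion, `(conj D)⁻¹` is in turn conjugate to `(conj A)⁻¹`.
-/

theorem Fintype.exists_equiv_of_multiset_map_univ_eq {ι κ α : Type*} [Fintype ι] [Fintype κ]
    {f : ι → α} {g : κ → α}
    (h : Finset.univ.val.map f = Finset.univ.val.map g) :
    ∃ e : ι ≃ κ, ∀ i, g (e i) = f i := by
  classical
  have hcard : ∀ a, Fintype.card {i // f i = a} = Fintype.card {k // g k = a} := by
    intro a
    have := congrArg (Multiset.count a) h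
    simp only [Multiset.count_map] at this
    simpa [Fintype.card_subtype, Finset.card_def, Finset.filter_val, eq_comm] using this
  exact ⟨Equiv.ofFiberEquiv fun a => Fintype.equivOfCardEq (hcard a),
    Equiv.ofFiberEquiv_map _⟩

namespace Matrix

variable {n R : Type*} [Fintype n] [DecidableEq n]

theorem isConj_iff_exists_isUnit [CommRing R] {A B : Matrix n n R} :
    IsConj A B ↔ ∃ P : Matrix n n R, IsUnit P ∧ P * A * P⁻¹ = B := by
  constructor
  · rintro ⟨c, hc⟩
    refine ⟨c, c.isUnit, ?_⟩
    rw [← coe_units_inv, Units.mul_inv_eq_iff_eq_mul]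
    exact hc
  · rintro ⟨_, ⟨c, rfl⟩, hc⟩
    refine ⟨c, ?_⟩
    rw [SemiconjBy, ← Units.mul_inv_eq_iff_eq_mul, coe_units_inv]
    exact hc

theorem IsConj.inv [CommRing R] {A B : Matrix n n R} (h : IsConj A B) : IsConj A⁻¹ B⁻¹ := by
  obtain ⟨P, hP, rfl⟩ := isConj_iff_exists_isUnit.1 h
  refine isConj_iff_exists_isUnit.2 ⟨P, hP, ?_⟩
  rw [mul_inv_rev, mul_inv_rev, nonsing_inv_nonsing_inv _ ((isUnit_iff_isUnit_det P).1 hP),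
    Matrix.mul_assoc]

theorem isConj_diagonal_comp_perm [Semiring R] (d : n → R) (σ : Equiv.Perm n) :
    IsConj (diagonal d) (diagonal (d ∘ σ)) := by
  refine ⟨permMatrixHom.toHomUnits σ⁻¹, ?_⟩
  change σ⁻¹⁻¹.permMatrix R * diagonal d = diagonal (d ∘ σ) * σ⁻¹⁻¹.permMatrix R
  rw [inv_inv, PEquiv.toMatrix_toPEquiv_mul, PEquiv.mul_toMatrix_toPEquiv]
  ext i j
  simp only [submatrix_apply, diagonal_apply, id, Function.comp_apply, Equiv.eq_symm_apply]

theorem isConj_diagonal_of_multiset_map_eq [Semiring R] {d d' : n → R}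
    (h : Finset.univ.val.map d = Finset.univ.val.map d') :
    IsConj (diagonal d) (diagonal d') := by
  obtain ⟨σ, hσ⟩ := Fintype.exists_equiv_of_multiset_map_univ_eq h.symm
  simpa [Function.comp_def, hσ] using isConj_diagonal_comp_perm d σ

theorem IsConj.charpoly_eq [CommRing R] {A B : Matrix n n R} (h : IsConj A B) :
    A.charpoly = B.charpoly := by
  obtain ⟨c, hc⟩ := h
  rw [← charpoly_units_conj c A, ← coe_units_inv, (Units.mul_inv_eq_iff_eq_mul c).2 hc.eq]

theorem IsConj.map {S : Type*} [CommRing R] [CommRing S] (f : R →+* S) {A B : Matrix n n R}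
    (h : IsConj A B) : IsConj (A.map f) (B.map f) :=
  (f.mapMatrix (m := n)).toMonoidHom.map_isConj h

theorem IsConj.det_eq [CommRing R] {A B : Matrix n n R} (h : IsConj A B) : A.det = B.det :=
  isConj_iff_eq.1 (detMonoidHom.map_isConj h)

theorem roots_charpoly_diagonal [CommRing R] [IsDomain R] (d : n → R) :
    (diagonal d).charpoly.roots = Finset.univ.val.map d := by
  rw [charpoly_diagonal, roots_prod _ _ (by
      simp [Finset.prod_ne_zero_iff, X_sub_C_ne_zero])]
  simp

theorem inv_diagonal_of_ne_zero {K : Type*} [Field K] {d : n → K} (h : ∀ i, d i ≠ 0) :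
    (diagonal d)⁻¹ = diagonal d⁻¹ := by
  refine inv_eq_left_inv ?_
  rw [diagonal_mul_diagonal, ← diagonal_one]
  exact congrArg diagonal (funext fun i => inv_mul_cancel₀ (h i))

end Matrix

/-- Every semisimple (diagonalizable) element `A` of `SL(n, ℂ)` whose multiset
of eigenvalues is invariant under `λ ↦ conj(λ)⁻¹` is c-reversible. -/
theorem semisimple_c_reciprocal_spectrum_c_reversible
    (n : ℕ) (A : Matrix (Fin n) (Fin n) ℂ) (hA : A.det = 1)
    (hdiag : ∃ P : Matrix (Fin n) (Fin n) ℂ, IsUnit P ∧ (P * A * P⁻¹).IsDiag)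
    (hroots : (A.charpoly.roots).map (fun lam => (starRingEnd ℂ lam)⁻¹)
        = A.charpoly.roots) :
    ∃ P : Matrix (Fin n) (Fin n) ℂ, IsUnit P ∧
      P * A * P⁻¹ = (A.map (starRingEnd ℂ))⁻¹ := by
  obtain ⟨P, hP, hD⟩ := hdiag
  set d := (P * A * P⁻¹).diag
  have hAD : IsConj A (diagonal d) :=
    isConj_iff_exists_isUnit.2 ⟨P, hP, hD.diagonal_diag.symm⟩
  -- Matrix `⁻¹` is junk `0` on singular matrices: `(diagonal d)⁻¹` is entrywise only if `d i ≠ 0`.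
  have hd : ∀ i, d i ≠ 0 := by
    have hdet : ∏ i, d i = 1 := by
      rw [← det_diagonal, ← hA, hAD.det_eq]
    exact fun i =>
      Finset.prod_ne_zero_iff.1 (by rw [hdet]; exact one_ne_zero) i (Finset.mem_univ i)
  have hspec : Finset.univ.val.map d = Finset.univ.val.map fun i => (starRingEnd ℂ (d i))⁻¹ := by
    rw [hAD.charpoly_eq, roots_charpoly_diagonal, Multiset.map_map] at hroots
    exact hroots.symm
  have hconj : IsConj ((diagonal d).map (starRingEnd ℂ))⁻¹ (A.map (starRingEnd ℂ))⁻¹ :=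
    (hAD.symm.map _).inv
  rw [diagonal_map (map_zero _), inv_diagonal_of_ne_zero (by simpa using hd)] at hconj
  exact isConj_iff_exists_isUnit.1
    ((hAD.trans (isConj_diagonal_of_multiset_map_eq hspec)).trans hconj)
end
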